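/- arXiv:2507.10114 — 2 statements merged into one kernel-verified Lean document; each statement's English description precedes it below -/
import Mathlib

section
/- Let G be a simple graph on n vertices. Then there exists a vertex assignment c : V(G) → {1, ..., 12n²} such that for every simple graph G' on n vertices and every vertex assignment c' : V(G') → ℤ⁺, if S(G,c) = S(G',c') then G is isomorphic to G'. -/
/-!
Label vertex `v` by `B + a v` with `B = 8n²`, where `a` is an Erdős–Turán Sidon sequence
`a x = 2px + (x² mod p)` (`n < p ≤ 2n` prime), whose values stay below `4n²`. All labels then
lie in `[B, 3B/2)`, so the connected sums below `2B` are exactly the labels and those below `3B`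
and at least `2B` are exactly the sums `c u + c v` over edges `uv`. Equal sum sets therefore force
the same labels on both graphs, and the Sidon property recovers each edge from its sum.
-/

def connSums {V : Type*} [Fintype V] (G : SimpleGraph V) (c : V → ℕ) : Set ℕ :=
  {N | ∃ s : Finset V, s.Nonempty ∧ (G.induce (↑s : Set V)).Connected ∧ ∑ v ∈ s, c v = N}

def IsSidon {α β : Type*} [Add β] (f : α → β) : Prop :=
  ∀ u v z w, f u + f v = f z + f w → s(u, v) = s(z, w)

namespace IsSidon

variable {α β γ : Type*}

theorem injective [Add β] {f : α → β} (hf : IsSidon f) : Function.Injective f := fun u v h =>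
  Sym2.diag_injective (hf u u v v (by rw [h]))

theorem comp [Add β] {f : α → β} (hf : IsSidon f) {e : γ → α} (he : Function.Injective e) :
    IsSidon (f ∘ e) := fun u v z w h =>
  Sym2.map.injective he (by simpa only [Sym2.map_mk] using hf _ _ _ _ h)

theorem const_add {f : α → ℕ} (hf : IsSidon f) (B : ℕ) : IsSidon (fun a => B + f a) :=
  fun u v z w h => hf u v z w (by dsimp only at h; omega)

end IsSidon

def erdosTuran (p x : ℕ) : ℕ := 2 * p * x + x ^ 2 % p

theorem erdosTuran_lt {p : ℕ} (hp : 0 < p) (x : ℕ) : erdosTuran p x < 2 * p * (x + 1) := by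
  have := Nat.mod_lt (x ^ 2) hp
  rw [erdosTuran, mul_add]
  omega

theorem isSidon_erdosTuran {p : ℕ} (hp : p.Prime) :
    IsSidon (fun x : Fin p => erdosTuran p x) := by
  rintro ⟨x, hx⟩ ⟨y, hy⟩ ⟨z, hz⟩ ⟨w, hw⟩ h
  simp only [erdosTuran] at h
  have hmod : ∀ a, a ^ 2 % p < p := fun a => Nat.mod_lt _ hp.pos
  -- both sides are written in base `2p`, with the residues as last digit
  have hdigits : ∀ s r, r < 2 * p →
      (2 * p * s + r) / (2 * p) = s ∧ (2 * p * s + r) % (2 * p) = r :=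
    fun s r hr => (Nat.div_mod_unique (by omega)).mpr ⟨by ring, hr⟩
  obtain ⟨hsum, hres⟩ : x + y = z + w ∧ x ^ 2 % p + y ^ 2 % p = z ^ 2 % p + w ^ 2 % p := by
    have hl := hdigits (x + y) (x ^ 2 % p + y ^ 2 % p) (by linarith [hmod x, hmod y])
    have hr := hdigits (z + w) (z ^ 2 % p + w ^ 2 % p) (by linarith [hmod z, hmod w])
    rw [show 2 * p * (x + y) + (x ^ 2 % p + y ^ 2 % p) = 2 * p * (z + w) + (z ^ 2 % p + w ^ 2 % p)
      by linarith] at hl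
    exact ⟨hl.1.symm.trans hr.1, hl.2.symm.trans hr.2⟩
  have hsq : x ^ 2 + y ^ 2 ≡ z ^ 2 + w ^ 2 [MOD p] := by
    rw [Nat.ModEq, Nat.add_mod, hres, ← Nat.add_mod]
  -- given `x + y = z + w`, the difference of the sums of squares is `2 (z - x) (x - w)`
  have hdvd : (p : ℤ) ∣ 2 * ((z : ℤ) - x) * ((x : ℤ) - w) := by
    have hy' : (y : ℤ) = z + w - x := by omega
    have := (Nat.modEq_iff_dvd.mp hsq)
    push_cast [hy'] at this
    convert this using 1
    ring
  rcases (Nat.prime_iff_prime_int.mp hp).dvd_or_dvd hdvd with h2 | hxw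
  · rcases (Nat.prime_iff_prime_int.mp hp).dvd_or_dvd h2 with h2 | hxz
    · have : p ≤ 2 := Nat.le_of_dvd two_pos (by exact_mod_cast h2)
      simp only [Sym2.eq_iff, Fin.mk.injEq]
      omega
    · have := (Nat.modEq_iff_dvd.mpr hxz).eq_of_lt_of_lt hx hz
      simp only [Sym2.eq_iff, Fin.mk.injEq]
      omega
  · have := (Nat.modEq_iff_dvd.mpr hxw).eq_of_lt_of_lt hw hx
    simp only [Sym2.eq_iff, Fin.mk.injEq]
    omega

theorem exists_isSidon_lt (n : ℕ) :
    ∃ a : Fin n → ℕ, IsSidon a ∧ ∀ i, a i < 4 * n ^ 2 := by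
  rcases Nat.eq_zero_or_pos n with rfl | hn
  · exact ⟨Fin.elim0, fun u => u.elim0, fun i => i.elim0⟩
  obtain ⟨p, hp, hnp, hp2n⟩ := Nat.exists_prime_lt_and_le_two_mul n hn.ne'
  refine ⟨fun i => erdosTuran p i, (isSidon_erdosTuran hp).comp (Fin.castLE_injective hnp.le),
    fun i => ?_⟩
  calc erdosTuran p i < 2 * p * (i + 1) := erdosTuran_lt hp.pos i
    _ ≤ 2 * (2 * n) * n := by gcongr; exact i.isLt
    _ = 4 * n ^ 2 := by ring

namespace SimpleGraph

variable {V : Type*} {G : SimpleGraph V}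

theorem adj_of_induce_pair_connected {u v : V} (huv : u ≠ v)
    (h : (G.induce {u, v}).Connected) : G.Adj u v := by
  obtain ⟨p⟩ := h.preconnected ⟨u, by simp⟩ ⟨v, by simp⟩
  cases p with
  | nil => exact absurd rfl huv
  | @cons _ w _ hadj _ =>
    obtain ⟨w, hw | hw⟩ := w
    · exact absurd (Subtype.ext hw.symm) hadj.ne
    · rw [Set.mem_singleton_iff] at hw
      exact hw ▸ hadj

theorem induce_pair_connected_iff {u v : V} (huv : u ≠ v) :
    (G.induce {u, v}).Connected ↔ G.Adj u v :=
  ⟨adj_of_induce_pair_connected huv, induce_pair_connected_of_adj⟩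

end SimpleGraph

open SimpleGraph

section connSums

variable {V V' : Type*} [Fintype V] [Fintype V'] {G : SimpleGraph V} {G' : SimpleGraph V'}
  {c : V → ℕ} {c' : V' → ℕ} {N B : ℕ}

theorem apply_mem_connSums (G : SimpleGraph V) (c : V → ℕ) (v : V) : c v ∈ connSums G c :=
  ⟨{v}, Finset.singleton_nonempty v, by
    rw [Finset.coe_singleton, induce_singleton_eq_top]; exact connected_top, by simp⟩

theorem add_mem_connSums [DecidableEq V] {u v : V} (h : G.Adj u v) : c u + c v ∈ connSums G c :=
  ⟨{u, v}, Finset.insert_nonempty u {v}, by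
    rw [Finset.coe_pair]; exact induce_pair_connected_of_adj h,
    Finset.sum_pair h.ne⟩

theorem le_of_mem_connSums (hc : ∀ v, B ≤ c v) (hN : N ∈ connSums G c) : B ≤ N := by
  obtain ⟨s, ⟨v, hv⟩, -, rfl⟩ := hN
  exact (hc v).trans (Finset.single_le_sum (fun _ _ => Nat.zero_le _) hv)

theorem exists_of_mem_connSums_of_lt (hc : ∀ v, B ≤ c v) (hN : N ∈ connSums G c)
    (hlt : N < 3 * B) :
    (∃ v, c v = N) ∨ ∃ u v, G.Adj u v ∧ c u + c v = N := by
  classical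
  obtain ⟨s, hs, hconn, rfl⟩ := hN
  have hcard : s.card * B ≤ ∑ v ∈ s, c v := by
    simpa using Finset.card_nsmul_le_sum s c B fun v _ => hc v
  have hcard3 : s.card < 3 := Nat.lt_of_mul_lt_mul_right (hcard.trans_lt hlt)
  interval_cases h : s.card
  · exact absurd (Finset.card_eq_zero.mp h) hs.ne_empty
  · obtain ⟨v, rfl⟩ := Finset.card_eq_one.mp h
    exact .inl ⟨v, by simp⟩
  · obtain ⟨u, v, huv, rfl⟩ := Finset.card_eq_two.mp h
    refine .inr ⟨u, v, (induce_pair_connected_iff huv).mp (by rwa [← Finset.coe_pair]), ?_⟩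
    exact (Finset.sum_pair huv).symm

theorem connSums_comp_iso_subset (φ : G ≃g G') : connSums G (c' ∘ φ) ⊆ connSums G' c' := by
  rintro _ ⟨s, hs, hconn, rfl⟩
  refine ⟨s.map φ.toEmbedding.toEmbedding, hs.map, ?_, by simp [Finset.sum_map]⟩
  rw [Finset.coe_map]
  exact (Iso.connected_iff (φ.induce φ.injective.injOn.bijOn_image)).mp hconn

theorem connSums_comp_iso (φ : G ≃g G') : connSums G (c' ∘ φ) = connSums G' c' := by
  refine (connSums_comp_iso_subset φ).antisymm ?_
  simpa [Function.comp_assoc] using connSums_comp_iso_subset (c' := c' ∘ φ) φ.symm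

/-- With labels in `[B, 3B/2)`, every pair sum `c u + c v` exceeds every label and lies below
every connected sum over three or more vertices. -/
theorem adj_of_connSums_subset {H₁ H₂ : SimpleGraph V}
    (hc : ∀ v, B ≤ c v ∧ 2 * c v < 3 * B) (hsidon : IsSidon c)
    (h : connSums H₁ c ⊆ connSums H₂ c) {u v : V} (huv : H₁.Adj u v) : H₂.Adj u v := by
  classical
  have hu := hc u
  have hv := hc v
  rcases exists_of_mem_connSums_of_lt (fun w => (hc w).1) (h (add_mem_connSums huv))
    (by omega) with ⟨w, hw⟩ | ⟨w₁, w₂, hadj, hw⟩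
  · have := hc w
    omega
  · have : s(w₁, w₂) ∈ H₂.edgeSet := hadj
    rwa [hsidon _ _ _ _ hw] at this

theorem eq_of_connSums_eq {H₁ H₂ : SimpleGraph V} (hc : ∀ v, B ≤ c v ∧ 2 * c v < 3 * B)
    (hsidon : IsSidon c) (h : connSums H₁ c = connSums H₂ c) : H₁ = H₂ :=
  le_antisymm (fun _ _ => adj_of_connSums_subset hc hsidon h.le)
    (fun _ _ => adj_of_connSums_subset hc hsidon h.ge)

theorem exists_equiv_of_connSums_eq (hc : ∀ v, B ≤ c v ∧ 2 * c v < 3 * B)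
    (hinj : Function.Injective c) (hcard : Fintype.card V' = Fintype.card V)
    (h : connSums G c = connSums G' c') :
    ∃ ψ : V ≃ V', ∀ v, c' (ψ v) = c v := by
  have hc' : ∀ w, B ≤ c' w := fun w =>
    le_of_mem_connSums (fun v => (hc v).1) (h ▸ apply_mem_connSums G' c' w)
  have hlift : ∀ v, ∃ w, c' w = c v := by
    intro v
    have := hc v
    have hmem : c v ∈ connSums G' c' := h ▸ apply_mem_connSums G c v
    refine (exists_of_mem_connSums_of_lt hc' hmem (by omega)).resolve_right ?_
    rintro ⟨w₁, w₂, -, hw⟩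
    have := hc' w₁
    have := hc' w₂
    omega
  choose φ hφ using hlift
  have hφ_inj : Function.Injective φ := fun u v huv => hinj (by rw [← hφ u, ← hφ v, huv])
  have hφ_bij := (Fintype.bijective_iff_injective_and_card φ).mpr ⟨hφ_inj, hcard.symm⟩
  exact ⟨Equiv.ofBijective φ hφ_bij, hφ⟩

theorem nonempty_iso_of_connSums_eq (hc : ∀ v, B ≤ c v ∧ 2 * c v < 3 * B)
    (hsidon : IsSidon c) (hcard : Fintype.card V' = Fintype.card V)
    (h : connSums G c = connSums G' c') :
    Nonempty (G ≃g G') := by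
  obtain ⟨ψ, hψ⟩ := exists_equiv_of_connSums_eq hc hsidon.injective hcard h
  have hcomap : connSums (G'.comap ψ) c = connSums G' c' := by
    rw [← connSums_comp_iso (Iso.comap ψ G')]
    congr 1
    exact funext fun v => (hψ v).symm
  rw [eq_of_connSums_eq hc hsidon (h.trans hcomap.symm)]
  exact ⟨Iso.comap ψ G'⟩

end connSums

/-- For every graph `G` on `n` vertices there is an assignment
`c : V(G) → {1, …, 12n²}` whose collection of connected subgraph sums determines `G`
among all `n`-vertex graphs. -/
theorem stmt_1 {V : Type} [Fintype V] (n : ℕ) (hn : Fintype.card V = n)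
    (G : SimpleGraph V) :
    ∃ c : V → ℕ, (∀ v, 1 ≤ c v ∧ c v ≤ 12 * n ^ 2) ∧
      ∀ (V' : Type) (_ : Fintype V') (G' : SimpleGraph V') (c' : V' → ℕ),
        Fintype.card V' = n → (∀ v, 0 < c' v) →
        connSums G c = connSums G' c' → Nonempty (G ≃g G') := by
  obtain ⟨a, ha, ha_lt⟩ := exists_isSidon_lt n
  let e := Fintype.equivFinOfCardEq hn
  have hwindow : ∀ v,
      8 * n ^ 2 ≤ 8 * n ^ 2 + a (e v) ∧ 2 * (8 * n ^ 2 + a (e v)) < 3 * (8 * n ^ 2) :=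
    fun v => ⟨Nat.le_add_right _ _, by linarith [ha_lt (e v)]⟩
  refine ⟨fun v => 8 * n ^ 2 + a (e v), fun v => ⟨?_, by linarith [ha_lt (e v)]⟩,
    fun V' _ G' c' hcard _ h => ?_⟩
  · have := (e v).pos
    nlinarith
  · exact nonempty_iso_of_connSums_eq hwindow ((ha.comp e.injective).const_add _)
      (hcard.trans hn.symm) h
end

section
/- For every n ≥ 1, m(S_{n+1}) ≤ 2·m(Kₙ), where Kₙ is the complete graph on n vertices and S_{n+1} = K_{1,n} is the star on n+1 vertices. -/
/-!
On the complete graph every nonempty vertex set is connected, so an SSD assignment `c` of `Kₙ`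
has pairwise distinct subset sums. Doubling `c` on the leaves of the star and putting `1` on the
centre keeps all subset sums distinct, since the parity of a sum tells whether the centre is in the
set. This weighting is therefore SSD for every graph on `n + 1` vertices, in particular for
`S_{n+1}`, and its maximum is at most `2 m(Kₙ)` because `m(Kₙ) ≥ 1` when `n ≥ 1`.
-/

/-- `c` is a subgraph sum-distinct (SSD) assignment of `G`: all values are positive and
distinct nonempty vertex subsets inducing connected subgraphs have distinct sums. -/
def IsSSD {V : Type*} [Fintype V] (G : SimpleGraph V) (c : V → ℕ) : Prop :=
  (∀ v, 0 < c v) ∧ ∀ s t : Finset V, s.Nonempty → t.Nonempty →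
    (G.induce (↑s : Set V)).Connected → (G.induce (↑t : Set V)).Connected →
    s ≠ t → ∑ v ∈ s, c v ≠ ∑ v ∈ t, c v

/-- `m(G)`: the minimum over all SSD assignments `c` of `G` of the maximum weight. -/
noncomputable def mval {V : Type*} [Fintype V] (G : SimpleGraph V) : ℕ :=
  sInf {N | ∃ c : V → ℕ, IsSSD G c ∧ Finset.univ.sup c = N}

/-- `M(G)`: the minimum total weight of an SSD assignment of `G`. -/
noncomputable def Mval {V : Type*} [Fintype V] (G : SimpleGraph V) : ℕ :=
  sInf {N | ∃ c : V → ℕ, IsSSD G c ∧ ∑ v, c v = N}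

/-- The star `S_{n+1} = K_{1,n}`: vertex `0` joined to the `n` other vertices. -/
def starGraph (n : ℕ) : SimpleGraph (Fin (n + 1)) where
  Adj i j := i ≠ j ∧ (i = 0 ∨ j = 0)
  symm := by constructor; intro i j h; exact ⟨h.1.symm, h.2.symm⟩
  loopless := by constructor; intro i h; exact h.1 rfl

open Finset

section SubsetSums

variable {V : Type*} [Fintype V]

lemma isSSD_of_sum_injective {G : SimpleGraph V} {c : V → ℕ} (hpos : ∀ v, 0 < c v)
    (hinj : Function.Injective fun s : Finset V => ∑ v ∈ s, c v) : IsSSD G c :=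
  ⟨hpos, fun _ _ _ _ _ _ hst h => hst (hinj h)⟩

lemma IsSSD.sum_injective_of_top {c : V → ℕ} (hc : IsSSD (⊤ : SimpleGraph V) c) :
    Function.Injective fun s : Finset V => ∑ v ∈ s, c v := by
  have hconn : ∀ s : Finset V, s.Nonempty → ((⊤ : SimpleGraph V).induce (s : Set V)).Connected :=
    fun s hs => by
      have : Nonempty (s : Set V) := hs.coe_sort
      rw [SimpleGraph.induce_top]
      exact SimpleGraph.connected_top
  intro s t hst
  by_contra hne
  rcases s.eq_empty_or_nonempty with rfl | hs
  · rcases t.eq_empty_or_nonempty with rfl | ht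
    · exact hne rfl
    · exact (sum_pos (fun v _ => hc.1 v) ht).ne hst
  rcases t.eq_empty_or_nonempty with rfl | ht
  · exact (sum_pos (fun v _ => hc.1 v) hs).ne' hst
  · exact hc.2 s t hs ht (hconn s hs) (hconn t ht) hne hst

lemma isSSD_two_pow {n : ℕ} (G : SimpleGraph (Fin n)) : IsSSD G fun i => 2 ^ (i : ℕ) := by
  refine isSSD_of_sum_injective (fun _ => Nat.two_pow_pos _) fun s t h => ?_
  have hval : ∀ u : Finset (Fin n), ∑ i ∈ u.map Fin.valEmbedding, 2 ^ i = ∑ i ∈ u, 2 ^ (i : ℕ) :=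
    fun u => sum_map _ _ _
  exact map_injective Fin.valEmbedding
    (geomSum_injective le_rfl ((hval s).trans (h.trans (hval t).symm)))

end SubsetSums

section FinCons

variable {n : ℕ}

lemma sum_finCons {M : Type*} [AddCommMonoid M] (a : M) (f : Fin n → M)
    (s : Finset (Fin (n + 1))) :
    ∑ v ∈ s, (Fin.cons a f : Fin (n + 1) → M) v =
      (if 0 ∈ s then a else 0) + ∑ i with i.succ ∈ s, f i := by
  conv_lhs => rw [← filter_univ_mem s, sum_filter, Fin.sum_univ_succ]
  rw [sum_filter]
  simp

lemma Finset.eq_of_mem_zero_iff_of_filter_succ_eq {s t : Finset (Fin (n + 1))}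
    (h0 : 0 ∈ s ↔ 0 ∈ t)
    (hsucc : (univ.filter fun i : Fin n => i.succ ∈ s) = univ.filter fun i => i.succ ∈ t) :
    s = t := by
  ext v
  induction v using Fin.cases with
  | zero => exact h0
  | succ i => simpa using congrArg (i ∈ ·) hsucc

-- A sum is odd exactly when it contains the new vertex `0`.
lemma sum_injective_finCons_one_two_mul {c : Fin n → ℕ}
    (hc : Function.Injective fun s : Finset (Fin n) => ∑ i ∈ s, c i) :
    Function.Injective fun s : Finset (Fin (n + 1)) =>
      ∑ v ∈ s, (Fin.cons 1 (fun i => 2 * c i) : Fin (n + 1) → ℕ) v := by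
  intro s t hst
  simp only [sum_finCons, ← mul_sum] at hst
  have h0 : 0 ∈ s ↔ 0 ∈ t := by split_ifs at hst <;> simp only [*] <;> omega
  refine Finset.eq_of_mem_zero_iff_of_filter_succ_eq h0 (hc ?_)
  dsimp only
  split_ifs at hst <;> omega

lemma sup_finCons_one_two_mul_le {c : Fin n → ℕ} (hc : 0 < univ.sup c) :
    univ.sup (Fin.cons 1 (fun i => 2 * c i) : Fin (n + 1) → ℕ) ≤ 2 * univ.sup c := by
  refine Finset.sup_le fun v _ => ?_
  induction v using Fin.cases with
  | zero => simp only [Fin.cons_zero]; omega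
  | succ i => simpa using le_sup (f := c) (mem_univ i)

end FinCons

lemma mval_le_sup {V : Type*} [Fintype V] {G : SimpleGraph V} {c : V → ℕ} (hc : IsSSD G c) :
    mval G ≤ univ.sup c :=
  Nat.sInf_le ⟨c, hc, rfl⟩

lemma exists_isSSD_sup_eq_mval {V : Type*} [Fintype V] {G : SimpleGraph V} {c : V → ℕ}
    (hc : IsSSD G c) : ∃ c : V → ℕ, IsSSD G c ∧ univ.sup c = mval G :=
  Nat.sInf_mem (⟨_, c, hc, rfl⟩ : {N | ∃ c : V → ℕ, IsSSD G c ∧ univ.sup c = N}.Nonempty)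

/-- `m(S_{n+1}) ≤ 2 ⬝ m(Kₙ)`. -/
theorem stmt_9 (n : ℕ) (hn : 1 ≤ n) :
    mval (starGraph n) ≤ 2 * mval (⊤ : SimpleGraph (Fin n)) := by
  obtain ⟨c, hc, hsup⟩ := exists_isSSD_sup_eq_mval (isSSD_two_pow (⊤ : SimpleGraph (Fin n)))
  have hsup_pos : 0 < univ.sup c := (hc.1 ⟨0, hn⟩).trans_le (le_sup (mem_univ _))
  have hstar : IsSSD (starGraph n) (Fin.cons 1 fun i => 2 * c i) :=
    isSSD_of_sum_injective (fun v => by induction v using Fin.cases <;> simp [hc.1])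
      (sum_injective_finCons_one_two_mul hc.sum_injective_of_top)
  calc mval (starGraph n) ≤ univ.sup (Fin.cons 1 fun i => 2 * c i : Fin (n + 1) → ℕ) :=
        mval_le_sup hstar
    _ ≤ 2 * mval (⊤ : SimpleGraph (Fin n)) := hsup ▸ sup_finCons_one_two_mul_le hsup_pos
end
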